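/- arXiv:2405.07219 — 6 statements merged into one kernel-verified Lean document; each statement's English description precedes it below -/
import Mathlib

section
/- Let $m \geq 1$ and $n \geq 1$ be integers and let $P_1, \dots, P_r$ be non-zero real polynomials whose product $P = P_1 \cdots P_r$ has degree at most $n$. Then $e^{-n} H(P_1) \cdots H(P_r) < H(P) < e^{n} H(P_1) \cdots H(P_r)$, where $H(Q)$ denotes the maximum of the absolute values of the coefficients of $Q$ (Gelfond's Lemma). -/
/-!
The upper bound is elementary: a coefficient of `p * q` is bounded by
`(deg p + 1) H(p) H(q)`, and `∏ (deg Pᵢ + 1) ≤ 2 ^ n < e ^ n`.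
The lower bound goes through the Mahler measure `M`, which is multiplicative: the coefficients
of a complex polynomial are elementary symmetric functions of its roots, so
`H(Pᵢ) ≤ 2 ^ (deg Pᵢ - 1) M(Pᵢ)`, while Landau's inequality gives `M(P) ≤ √(n + 1) H(P)`,
and `2 ^ (n - 1) √(n + 1) < e ^ n`.
-/

open Polynomial

/-- Naive height of a real polynomial: the maximum of the absolute values of its
coefficients. -/
noncomputable def heightR (P : Polynomial ℝ) : ℝ := ⨆ i : ℕ, |P.coeff i|

open Real

theorem heightR_eq_supNorm (p : ℝ[X]) : heightR p = p.supNorm := by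
  simp [heightR, supNorm_eq_iSup]

theorem Nat.choose_le_two_pow_pred (n k : ℕ) : n.choose k ≤ 2 ^ (n - 1) := by
  cases n with
  | zero => cases k <;> simp
  | succ n => exact choose_succ_le_two_pow n k

namespace Polynomial

section SeminormedRing

variable {A : Type*} [SeminormedRing A]

theorem norm_coeff_mul_le (p q : A[X]) (k : ℕ) :
    ‖(p * q).coeff k‖ ≤ (∑ i ∈ p.support, ‖p.coeff i‖) * q.supNorm := by
  conv_lhs => rw [p.as_sum_support_C_mul_X_pow, Finset.sum_mul, finsetSum_coeff]
  refine (norm_sum_le _ _).trans ?_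
  rw [Finset.sum_mul]
  refine Finset.sum_le_sum fun i _ => ?_
  rw [mul_assoc, coeff_C_mul]
  refine (norm_mul_le _ _).trans (mul_le_mul_of_nonneg_left ?_ (norm_nonneg _))
  rw [coeff_X_pow_mul']
  split_ifs
  · exact q.le_supNorm _
  · simpa using q.supNorm_nonneg

theorem sum_norm_coeff_le (p : A[X]) :
    ∑ i ∈ p.support, ‖p.coeff i‖ ≤ (p.natDegree + 1) * p.supNorm := by
  refine (Finset.sum_le_card_nsmul _ _ _ fun i _ => p.le_supNorm i).trans ?_
  rw [nsmul_eq_mul]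
  gcongr
  · exact p.supNorm_nonneg
  · exact_mod_cast p.card_supp_le_succ_natDegree

theorem supNorm_mul_le (p q : A[X]) :
    (p * q).supNorm ≤ (p.natDegree + 1) * p.supNorm * q.supNorm := by
  obtain ⟨k, hk⟩ := (p * q).exists_eq_supNorm
  rw [hk]
  exact (norm_coeff_mul_le p q k).trans
    (mul_le_mul_of_nonneg_right (sum_norm_coeff_le p) q.supNorm_nonneg)

end SeminormedRing

theorem supNorm_prod_le {A ι : Type*} [SeminormedCommRing A] [NormOneClass A]
    (s : Finset ι) (f : ι → A[X]) :
    (∏ i ∈ s, f i).supNorm ≤ ∏ i ∈ s, ((f i).natDegree + 1) * (f i).supNorm := by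
  induction s using Finset.cons_induction with
  | empty => rw [Finset.prod_empty, Finset.prod_empty, ← C_1, supNorm_C, norm_one]
  | cons a s ha ih =>
    rw [Finset.prod_cons, Finset.prod_cons]
    exact (supNorm_mul_le _ _).trans
      (mul_le_mul_of_nonneg_left ih (mul_nonneg (by positivity) (supNorm_nonneg _)))

theorem supNorm_prod_le_two_pow_mul_prod_supNorm {A ι : Type*} [SeminormedCommRing A]
    [NormOneClass A] (s : Finset ι) (f : ι → A[X]) :
    (∏ i ∈ s, f i).supNorm ≤ 2 ^ (∑ i ∈ s, (f i).natDegree) * ∏ i ∈ s, (f i).supNorm := by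
  refine (supNorm_prod_le s f).trans ?_
  rw [Finset.prod_mul_distrib, ← Finset.prod_pow_eq_pow_sum]
  gcongr with i
  · exact Finset.prod_nonneg fun i _ => supNorm_nonneg _
  · exact_mod_cast Nat.lt_two_pow_self

theorem supNorm_pos {A : Type*} [NormedRing A] {p : A[X]} (hp : p ≠ 0) : 0 < p.supNorm :=
  p.supNorm_nonneg.lt_of_ne' (mt p.supNorm_eq_zero_iff.1 hp)

theorem supNorm_le_two_pow_mul_mahlerMeasure (p : ℂ[X]) :
    p.supNorm ≤ 2 ^ (p.natDegree - 1) * p.mahlerMeasure :=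
  p.supNorm_le_choose_natDegree_div_two_mul_mahlerMeasure.trans <| by
    gcongr
    · exact p.mahlerMeasure_nonneg
    · exact_mod_cast Nat.choose_le_two_pow_pred _ _

theorem prod_supNorm_le_two_pow_mul_mahlerMeasure_prod {ι : Type*} (s : Finset ι)
    (f : ι → ℂ[X]) :
    ∏ i ∈ s, (f i).supNorm ≤
      2 ^ (∑ i ∈ s, (f i).natDegree - 1) * (∏ i ∈ s, f i).mahlerMeasure := by
  induction s using Finset.cons_induction with
  | empty => simp
  | cons a s ha ih =>
    rw [Finset.prod_cons, Finset.sum_cons, Finset.prod_cons, mahlerMeasure_mul]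
    calc (f a).supNorm * ∏ i ∈ s, (f i).supNorm
        ≤ (2 ^ ((f a).natDegree - 1) * (f a).mahlerMeasure) *
            (2 ^ (∑ i ∈ s, (f i).natDegree - 1) * (∏ i ∈ s, f i).mahlerMeasure) :=
          mul_le_mul (supNorm_le_two_pow_mul_mahlerMeasure _) ih
            (Finset.prod_nonneg fun i _ => supNorm_nonneg _)
            (mul_nonneg (by positivity) (mahlerMeasure_nonneg _))
      _ = 2 ^ ((f a).natDegree - 1 + (∑ i ∈ s, (f i).natDegree - 1)) *
            ((f a).mahlerMeasure * (∏ i ∈ s, f i).mahlerMeasure) := by ring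
      _ ≤ 2 ^ ((f a).natDegree + ∑ i ∈ s, (f i).natDegree - 1) *
            ((f a).mahlerMeasure * (∏ i ∈ s, f i).mahlerMeasure) := by
          gcongr
          · exact mul_nonneg (mahlerMeasure_nonneg _) (mahlerMeasure_nonneg _)
          · norm_num
          · omega

theorem prod_supNorm_le_mul_supNorm_prod {ι : Type*} (s : Finset ι) (f : ι → ℂ[X]) :
    ∏ i ∈ s, (f i).supNorm ≤
      2 ^ (∑ i ∈ s, (f i).natDegree - 1) * √(∑ i ∈ s, (f i).natDegree + 1) *
        (∏ i ∈ s, f i).supNorm := by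
  rw [mul_assoc]
  refine (prod_supNorm_le_two_pow_mul_mahlerMeasure_prod s f).trans ?_
  gcongr
  refine (mahlerMeasure_le_sqrt_natDegree_add_one_mul_supNorm _).trans ?_
  gcongr
  · exact supNorm_nonneg _
  · exact_mod_cast natDegree_prod_le s f

theorem supNorm_map_ofReal (p : ℝ[X]) : (p.map Complex.ofRealHom).supNorm = p.supNorm := by
  simp [supNorm_eq_iSup, Complex.norm_real]

theorem prod_supNorm_le_mul_supNorm_prod_real {ι : Type*} (s : Finset ι) (f : ι → ℝ[X]) :
    ∏ i ∈ s, (f i).supNorm ≤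
      2 ^ (∑ i ∈ s, (f i).natDegree - 1) * √(∑ i ∈ s, (f i).natDegree + 1) *
        (∏ i ∈ s, f i).supNorm := by
  simpa only [supNorm_map_ofReal, natDegree_map, ← Polynomial.map_prod] using
    prod_supNorm_le_mul_supNorm_prod s fun i => (f i).map Complex.ofRealHom

end Polynomial

theorem four_pow_mul_add_two_lt_exp (m : ℕ) : 4 ^ m * ((m : ℝ) + 2) < exp (2 * (m + 1)) := by
  have h4 : (4 : ℝ) ≤ exp (3 / 2) := by
    rw [show (3 / 2 : ℝ) = 1 + 1 / 2 by norm_num, exp_add]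
    nlinarith [exp_one_gt_d9, add_one_le_exp (1 / 2 : ℝ), exp_pos (1 / 2 : ℝ)]
  calc 4 ^ m * ((m : ℝ) + 2) ≤ exp (3 / 2) ^ m * (2 * exp (m / 2)) := by
        gcongr
        linarith [add_one_le_exp ((m : ℝ) / 2)]
    _ = 2 * exp (2 * m) := by
        rw [← exp_nat_mul, mul_left_comm, ← exp_add]
        ring_nf
    _ < exp 2 * exp (2 * m) := by
        gcongr
        linarith [add_one_le_exp (2 : ℝ)]
    _ = exp (2 * (m + 1)) := by rw [← exp_add]; ring_nf

theorem two_pow_pred_mul_sqrt_lt_exp {n : ℕ} (hn : 1 ≤ n) :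
    2 ^ (n - 1) * √((n : ℝ) + 1) < exp n := by
  obtain ⟨m, rfl⟩ := Nat.exists_eq_add_of_le' hn
  refine lt_of_pow_lt_pow_left₀ 2 (exp_pos _).le ?_
  rw [mul_pow, sq_sqrt (by positivity), ← exp_nat_mul, ← pow_mul]
  push_cast
  rw [mul_comm m 2, pow_mul, add_assoc, one_add_one_eq_two, show (2 : ℝ) ^ 2 = 4 by norm_num]
  exact four_pow_mul_add_two_lt_exp m

theorem gelfond_lemma_general (n r : ℕ) (hn : 1 ≤ n)
    (P : Fin r → Polynomial ℝ) (hP : ∀ i, P i ≠ 0)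
    (hdeg : (∏ i, P i).natDegree ≤ n) :
    Real.exp (-(n : ℝ)) * ∏ i, heightR (P i) < heightR (∏ i, P i) ∧
      heightR (∏ i, P i) < Real.exp (n : ℝ) * ∏ i, heightR (P i) := by
  have hdeg_sum : ∑ i, (P i).natDegree ≤ n := natDegree_prod _ _ (fun i _ => hP i) ▸ hdeg
  have hH_prod : 0 < (∏ i, P i).supNorm :=
    supNorm_pos (Finset.prod_ne_zero_iff.2 fun i _ => hP i)
  have hprod_H : 0 < ∏ i, (P i).supNorm := Finset.prod_pos fun i _ => supNorm_pos (hP i)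
  simp only [heightR_eq_supNorm]
  constructor
  · rw [exp_neg, inv_mul_lt_iff₀ (exp_pos _)]
    calc ∏ i, (P i).supNorm
        ≤ 2 ^ (∑ i, (P i).natDegree - 1) * √(∑ i, (P i).natDegree + 1) * (∏ i, P i).supNorm :=
          prod_supNorm_le_mul_supNorm_prod_real _ _
      _ ≤ 2 ^ (n - 1) * √((n : ℝ) + 1) * (∏ i, P i).supNorm := by gcongr; norm_num
      _ < exp n * (∏ i, P i).supNorm := by
          gcongr
          exact two_pow_pred_mul_sqrt_lt_exp hn
  · calc (∏ i, P i).supNorm ≤ 2 ^ (∑ i, (P i).natDegree) * ∏ i, (P i).supNorm :=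
          supNorm_prod_le_two_pow_mul_prod_supNorm _ _
      _ ≤ 2 ^ n * ∏ i, (P i).supNorm := by gcongr; norm_num
      _ < exp n * ∏ i, (P i).supNorm := by
          gcongr
          rw [← exp_one_pow]
          exact pow_lt_pow_left₀ exp_one_gt_two (by norm_num) (by omega)

/-- **Gelfond's Lemma.** -/
theorem gelfond_lemma (n r : ℕ) (hn : 1 ≤ n) (hr : 1 ≤ r)
    (P : Fin r → Polynomial ℝ) (hP : ∀ i, P i ≠ 0)
    (hdeg : (∏ i, P i).natDegree ≤ n) :
    Real.exp (-(n : ℝ)) * ∏ i, heightR (P i) < heightR (∏ i, P i) ∧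
      heightR (∏ i, P i) < Real.exp (n : ℝ) * ∏ i, heightR (P i) :=
  gelfond_lemma_general n r hn P hP hdeg
end

section
/- Let $\xi$ be a real number and $n, p, q$ positive integers with $p, q \leq n$. There exists a constant $c > 0$ depending only on $\xi$ and $n$ such that for any integer polynomials $P, Q$ of degree $p$ and $q$ respectively, $|\mathrm{Res}(P,Q)| \leq c\, H(P)^{q-1} H(Q)^{p-1} \max\{H(P)|Q(\xi)|,\ H(Q)|P(\xi)|\}$. -/
/-
Replace the last row of the Sylvester matrix by `∑ ξ ^ (q + p - 1 - i) • row i`. The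
determinant is unchanged, and since column `j` lists the coefficients of `X ^ (q - 1 - j) * P`
(resp. column `q + j` those of `X ^ (p - 1 - j) * Q`), from the top degree down, the new last row
is `(ξ ^ (q - 1) P(ξ), …, P(ξ), ξ ^ (p - 1) Q(ξ), …, Q(ξ))`. In the Leibniz expansion each term
contains exactly one entry of this row, the others being bounded by `H(P)` in the first `q`
columns and by `H(Q)` in the last `p`; this gives the bound with `c = (2n)! · max(1, |ξ|)ⁿ`.
-/

open Polynomial

/-- Naive height of an integer polynomial, as a real number. -/
noncomputable def heightZ (P : Polynomial ℤ) : ℝ := ⨆ i : ℕ, |(P.coeff i : ℝ)|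

/-- The Sylvester matrix of two integer polynomials `P`, `Q` of respective degrees
`p`, `q`: the first `q` columns contain the coefficients of `P` (shifted), the last
`p` columns those of `Q`. -/
def sylvester (P Q : Polynomial ℤ) (p q : ℕ) : Matrix (Fin (q + p)) (Fin (q + p)) ℤ :=
  fun i j =>
    if (j : ℕ) < q then
      (if (j : ℕ) ≤ (i : ℕ) ∧ (i : ℕ) ≤ (j : ℕ) + p then P.coeff (p - ((i : ℕ) - (j : ℕ)))
       else 0)
    else
      (if (j : ℕ) - q ≤ (i : ℕ) ∧ (i : ℕ) ≤ ((j : ℕ) - q) + q then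
        Q.coeff (q - ((i : ℕ) - ((j : ℕ) - q)))
       else 0)

/-- The resultant of `P` and `Q` (of degrees `p` and `q`), as the determinant of
their Sylvester matrix. -/
def res (P Q : Polynomial ℤ) (p q : ℕ) : ℤ := (_root_.sylvester P Q p q).det

open Finset

theorem abs_det_le_of_abs_apply_le {n R : Type*} [Fintype n] [DecidableEq n] [CommRing R]
    [LinearOrder R] [IsStrictOrderedRing R] (A : Matrix n n R) (e : n) (B E : n → R) (c : R)
    (hA : ∀ i j, i ≠ e → |A i j| ≤ B j) (hE : ∀ j, |A e j| ≤ E j)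
    (hc : ∀ j, E j * ∏ k ∈ univ.erase j, B k ≤ c) :
    |A.det| ≤ (Fintype.card n).factorial * c := by
  have hterm : ∀ σ : Equiv.Perm n, |Equiv.Perm.sign σ • ∏ i, A (σ i) i| ≤ c := by
    intro σ
    set j := σ.symm e
    have hσj : σ j = e := σ.apply_symm_apply e
    have hrest : ∏ i ∈ univ.erase j, |A (σ i) i| ≤ ∏ i ∈ univ.erase j, B i :=
      prod_le_prod (fun _ _ => abs_nonneg _) fun i hi =>
        hA _ _ fun h => ne_of_mem_erase hi (σ.injective (h.trans hσj.symm))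
    calc |Equiv.Perm.sign σ • ∏ i, A (σ i) i|
        = |A (σ j) j| * ∏ i ∈ univ.erase j, |A (σ i) i| := by
          rw [Units.smul_def, abs_zsmul, Int.isUnit_iff_abs_eq.mp (Units.isUnit _), one_smul,
            abs_prod, ← mul_prod_erase _ _ (mem_univ j)]
      _ ≤ E j * ∏ i ∈ univ.erase j, B i :=
          mul_le_mul (hσj ▸ hE j) hrest (prod_nonneg fun _ _ => abs_nonneg _)
            ((abs_nonneg _).trans (hE j))
      _ ≤ c := hc j
  calc |A.det| ≤ ∑ σ : Equiv.Perm n, |Equiv.Perm.sign σ • ∏ i, A (σ i) i| := by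
        rw [Matrix.det_apply]; exact abs_sum_le_sum_abs _ _
    _ ≤ (Fintype.card n).factorial * c := by
        simpa [Fintype.card_perm] using sum_le_card_nsmul univ _ c fun σ _ => hterm σ

theorem sum_pow_mul_coeff_rev {R A : Type*} [CommSemiring R] [CommSemiring A] [Algebra R A]
    {F : R[X]} {N : ℕ} (hF : F.natDegree < N) (x : A) :
    ∑ i : Fin N, x ^ (N - 1 - i) * algebraMap R A (F.coeff (N - 1 - i)) = aeval x F := by
  rw [aeval_eq_sum_range' hF, ← Fin.sum_univ_eq_sum_range]
  refine Fintype.sum_equiv Fin.revPerm _ _ fun i => ?_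
  rw [Fin.revPerm_apply, Fin.val_rev, Algebra.smul_def, mul_comm,
    show N - (i + 1) = N - 1 - i by omega]

theorem prod_fin_ite_lt {M : Type*} [CommMonoid M] (a b : M) (q p : ℕ) :
    ∏ k : Fin (q + p), (if (k : ℕ) < q then a else b) = a ^ q * b ^ p := by
  simp [Fin.prod_univ_add]

theorem ite_mul_prod_erase_ite_le {K : Type*} [Field K] [LinearOrder K] [IsStrictOrderedRing K]
    {a b H L : K} (hH : 0 < H) (hL : 0 < L) {p q : ℕ} (hp : 1 ≤ p) (hq : 1 ≤ q)
    (j : Fin (q + p)) :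
    (if (j : ℕ) < q then a else b) * ∏ k ∈ univ.erase j, (if (k : ℕ) < q then H else L) ≤
      H ^ (q - 1) * L ^ (p - 1) * max (H * b) (L * a) := by
  have hprod := mul_prod_erase univ (fun k : Fin (q + p) => if (k : ℕ) < q then H else L)
    (mem_univ j)
  rw [prod_fin_ite_lt] at hprod
  have hHL : 0 ≤ H ^ (q - 1) * L ^ (p - 1) := by positivity
  split_ifs at hprod ⊢ with hj
  · have hrest : ∏ k ∈ univ.erase j, (if (k : ℕ) < q then H else L) = H ^ (q - 1) * L ^ p :=
      mul_left_cancel₀ hH.ne' (by rw [hprod, ← mul_assoc, mul_pow_sub_one (by omega)])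
    rw [hrest]
    calc a * (H ^ (q - 1) * L ^ p) = H ^ (q - 1) * L ^ (p - 1) * (L * a) := by
          rw [← mul_pow_sub_one (by omega : p ≠ 0) L]; ring
      _ ≤ _ := mul_le_mul_of_nonneg_left (le_max_right _ _) hHL
  · have hrest : ∏ k ∈ univ.erase j, (if (k : ℕ) < q then H else L) = H ^ q * L ^ (p - 1) :=
      mul_left_cancel₀ hL.ne' (by rw [hprod, mul_left_comm, mul_pow_sub_one (by omega)])
    rw [hrest]
    calc b * (H ^ q * L ^ (p - 1)) = H ^ (q - 1) * L ^ (p - 1) * (H * b) := by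
          rw [← mul_pow_sub_one (by omega : q ≠ 0) H]; ring
      _ ≤ _ := mul_le_mul_of_nonneg_left (le_max_left _ _) hHL

theorem abs_pow_le_max_one_pow (x : ℝ) {k n : ℕ} (hk : k ≤ n) : |x| ^ k ≤ max 1 |x| ^ n :=
  (pow_le_pow_left₀ (abs_nonneg x) (le_max_right 1 |x|) k).trans
    (pow_le_pow_right₀ (le_max_left 1 |x|) hk)

theorem bddAbove_range_abs_coeff (P : ℤ[X]) :
    BddAbove (Set.range fun i : ℕ => |(P.coeff i : ℝ)|) := by
  refine ⟨(P.support.sup fun i => (P.coeff i).natAbs : ℕ), ?_⟩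
  rintro _ ⟨i, rfl⟩
  by_cases hi : i ∈ P.support
  · show |(P.coeff i : ℝ)| ≤ _
    rw [← Int.cast_abs, Int.abs_eq_natAbs]
    exact_mod_cast Finset.le_sup (f := fun i => (P.coeff i).natAbs) hi
  · simp [notMem_support_iff.1 hi]

theorem abs_coeff_le_heightZ (P : ℤ[X]) (i : ℕ) : |(P.coeff i : ℝ)| ≤ heightZ P :=
  le_ciSup (bddAbove_range_abs_coeff P) i

theorem heightZ_nonneg (P : ℤ[X]) : 0 ≤ heightZ P :=
  (abs_nonneg _).trans (abs_coeff_le_heightZ P 0)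

theorem heightZ_pos {P : ℤ[X]} (hP : P ≠ 0) : 0 < heightZ P :=
  (abs_pos.2 (Int.cast_ne_zero.2 (leadingCoeff_ne_zero.2 hP))).trans_le
    (abs_coeff_le_heightZ P P.natDegree)

section Sylvester

variable {P Q : ℤ[X]} {p q : ℕ}

theorem sylvester_apply_of_lt (hP : P.natDegree ≤ p) (i j : Fin (q + p)) (hj : (j : ℕ) < q) :
    _root_.sylvester P Q p q i j = (X ^ (q - 1 - j) * P).coeff (q + p - 1 - i) := by
  simp only [_root_.sylvester, if_pos hj, coeff_X_pow_mul']
  split_ifs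
  · congr 1; omega
  · omega
  · exact (coeff_eq_zero_of_natDegree_lt (by omega)).symm
  · rfl

theorem sylvester_apply_of_le (hQ : Q.natDegree ≤ q) (i j : Fin (q + p)) (hj : q ≤ (j : ℕ)) :
    _root_.sylvester P Q p q i j = (X ^ (p - 1 - (j - q)) * Q).coeff (q + p - 1 - i) := by
  simp only [_root_.sylvester, if_neg (not_lt.2 hj), coeff_X_pow_mul']
  split_ifs
  · congr 1; omega
  · omega
  · exact (coeff_eq_zero_of_natDegree_lt (by omega)).symm
  · rfl

noncomputable def sylvesterEvalRow {A : Type*} [CommRing A] (P Q : ℤ[X]) (p q : ℕ) (x : A)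
    (j : Fin (q + p)) : A :=
  if (j : ℕ) < q then x ^ (q - 1 - j) * aeval x P else x ^ (p - 1 - (j - q)) * aeval x Q

theorem sum_pow_mul_sylvester {A : Type*} [CommRing A] (hP : P.natDegree ≤ p)
    (hQ : Q.natDegree ≤ q) (x : A) (j : Fin (q + p)) :
    ∑ i : Fin (q + p), x ^ (q + p - 1 - i) * (_root_.sylvester P Q p q i j : A) =
      sylvesterEvalRow P Q p q x j := by
  have hdeg (F : ℤ[X]) (k : ℕ) (hF : F.natDegree + k < q + p) : (X ^ k * F).natDegree < q + p :=
    (natDegree_mul_le.trans (by rw [natDegree_X_pow]; omega)).trans_lt hF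
  unfold sylvesterEvalRow
  split_ifs with hj
  · simp_rw [sylvester_apply_of_lt hP _ _ hj, ← eq_intCast (algebraMap ℤ A),
      sum_pow_mul_coeff_rev (hdeg P (q - 1 - j) (by omega)), aeval_mul, aeval_X_pow]
  · simp_rw [sylvester_apply_of_le hQ _ _ (not_lt.1 hj), ← eq_intCast (algebraMap ℤ A),
      sum_pow_mul_coeff_rev (hdeg Q (p - 1 - (j - q)) (by omega)), aeval_mul, aeval_X_pow]

theorem res_eq_det_updateRow {A : Type*} [CommRing A] (hP : P.natDegree ≤ p)
    (hQ : Q.natDegree ≤ q) (x : A) (hpq : 0 < q + p) :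
    (res P Q p q : A) = (((_root_.sylvester P Q p q).map (Int.cast : ℤ → A)).updateRow
      ⟨q + p - 1, Nat.sub_one_lt hpq.ne'⟩ (sylvesterEvalRow P Q p q x)).det := by
  have hrow : sylvesterEvalRow P Q p q x =
      ∑ i : Fin (q + p), x ^ (q + p - 1 - i) • (_root_.sylvester P Q p q).map Int.cast i := by
    ext j
    simp only [← sum_pow_mul_sylvester hP hQ x j, Finset.sum_apply, Pi.smul_apply, smul_eq_mul,
      Matrix.map_apply]
  rw [hrow, Matrix.det_updateRow_sum, Nat.sub_self, pow_zero, one_smul, res]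
  exact RingHom.map_det (Int.castRingHom A) _

end Sylvester

theorem abs_sylvester_apply_le (P Q : ℤ[X]) (p q : ℕ) (i j : Fin (q + p)) :
    |(_root_.sylvester P Q p q i j : ℝ)| ≤ if (j : ℕ) < q then heightZ P else heightZ Q := by
  unfold _root_.sylvester
  split_ifs <;> simp [abs_coeff_le_heightZ, heightZ_nonneg]

theorem abs_sylvesterEvalRow_le (P Q : ℤ[X]) {p q n : ℕ} (hp : p ≤ n) (hq : q ≤ n) (x : ℝ)
    (j : Fin (q + p)) :
    |sylvesterEvalRow P Q p q x j| ≤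
      max 1 |x| ^ n * if (j : ℕ) < q then |aeval x P| else |aeval x Q| := by
  unfold sylvesterEvalRow
  split_ifs <;>
  · rw [abs_mul, abs_pow]
    exact mul_le_mul_of_nonneg_right (abs_pow_le_max_one_pow x (by omega)) (abs_nonneg _)

theorem resultant_bound_general (ξ : ℝ) (n : ℕ) :
    ∃ c : ℝ, 0 < c ∧ ∀ p q : ℕ, 1 ≤ p → 1 ≤ q → p ≤ n → q ≤ n →
      ∀ P Q : Polynomial ℤ, P.natDegree = p → Q.natDegree = q →
      |((res P Q p q : ℤ) : ℝ)| ≤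
        c * heightZ P ^ (q - 1) * heightZ Q ^ (p - 1) *
          max (heightZ P * |Polynomial.aeval ξ Q|) (heightZ Q * |Polynomial.aeval ξ P|) := by
  refine ⟨(2 * n).factorial * max 1 |ξ| ^ n, by positivity, ?_⟩
  intro p q hp hq hpn hqn P Q hP hQ
  have hHP : 0 < heightZ P := heightZ_pos (ne_zero_of_natDegree_gt (n := 0) (by omega))
  have hHQ : 0 < heightZ Q := heightZ_pos (ne_zero_of_natDegree_gt (n := 0) (by omega))
  set R := heightZ P ^ (q - 1) * heightZ Q ^ (p - 1) *
    max (heightZ P * |aeval ξ Q|) (heightZ Q * |aeval ξ P|)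
  rw [res_eq_det_updateRow hP.le hQ.le ξ (by omega)]
  refine (abs_det_le_of_abs_apply_le _ ⟨q + p - 1, by omega⟩
    (fun j : Fin (q + p) => if (j : ℕ) < q then heightZ P else heightZ Q)
    (fun j : Fin (q + p) => max 1 |ξ| ^ n * if (j : ℕ) < q then |aeval ξ P| else |aeval ξ Q|)
    (max 1 |ξ| ^ n * R) ?_ ?_ ?_).trans ?_
  · intro i j hi
    rw [Matrix.updateRow_ne hi]
    exact abs_sylvester_apply_le P Q p q i j
  · intro j
    rw [Matrix.updateRow_self]
    exact abs_sylvesterEvalRow_le P Q hpn hqn ξ j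
  · intro j
    rw [mul_assoc]
    exact mul_le_mul_of_nonneg_left (ite_mul_prod_erase_ite_le hHP hHQ hp hq j) (by positivity)
  · rw [Fintype.card_fin]
    calc ((q + p).factorial : ℝ) * (max 1 |ξ| ^ n * R)
        ≤ (2 * n).factorial * (max 1 |ξ| ^ n * R) :=
          mul_le_mul_of_nonneg_right (Nat.cast_le.2 (Nat.factorial_le (by omega))) (by positivity)
      _ = _ := by ring

/-- Classical upper bound for the resultant of two integer polynomials: the constant
`c` depends only on `ξ` and `n`. -/
theorem resultant_bound (ξ : ℝ) (n : ℕ) (hn : 1 ≤ n) :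
    ∃ c : ℝ, 0 < c ∧ ∀ p q : ℕ, 1 ≤ p → 1 ≤ q → p ≤ n → q ≤ n →
      ∀ P Q : Polynomial ℤ, P.natDegree = p → Q.natDegree = q →
      |((res P Q p q : ℤ) : ℝ)| ≤
        c * heightZ P ^ (q - 1) * heightZ Q ^ (p - 1) *
          max (heightZ P * |Polynomial.aeval ξ Q|) (heightZ Q * |Polynomial.aeval ξ P|) :=
  resultant_bound_general ξ n
end

section
/- Let $\xi$ be a transcendental real number, $n$ a positive integer, and $(P_i)_{i \geq 0}$ a sequence of minimal polynomials associated to $n$ and $\xi$. For each $i \geq 0$, the polynomial $S_i = P_i(\xi) P_{i+1} - P_{i+1}(\xi) P_i$ satisfies $\frac{1}{2} H(S_i) \leq H(P_{i+1}) |P_i(\xi)| \leq 2 H(S_i)$. -/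
/-!
With `a = P_i(ξ)`, `b = P_{i+1}(ξ)` and `S = a P_{i+1} - b P_i`, the upper bound
`H(S) ≤ |a| H(P_{i+1}) + |b| H(P_i) ≤ 2 |a| H(P_{i+1})` is the triangle inequality for the
height. For the lower bound, suppose `2 H(S) < |a| H(P_{i+1})`. From `a P_{i+1} = S + b P_i` we
get `|b| > |a| / 2`, so for a suitable sign `s = ±1` the integer polynomial `D = P_{i+1} - s P_i`
satisfies `0 < |D(ξ)| = |a| - |b| < |a|`. Minimality of `P_{i+1}` forces
`H(D) ≥ H(P_{i+1})`, whereas `a D = S + (b - s a) P_i` gives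
`|a| H(D) ≤ H(S) + (|a| - |b|) H(P_i) < |a| H(P_{i+1})`.
-/

open Polynomial

/-- The real polynomial obtained from an integer polynomial. -/
noncomputable def toR (P : Polynomial ℤ) : Polynomial ℝ := P.map (Int.castRingHom ℝ)

/-- A sequence of minimal polynomials associated to `n` and `ξ`. -/
def IsMinimalSeq (n : ℕ) (ξ : ℝ) (P : ℕ → Polynomial ℤ) : Prop :=
  (∀ i, P i ≠ 0) ∧ (∀ i, (P i).natDegree ≤ n) ∧
  (∀ i, heightZ (P i) < heightZ (P (i + 1))) ∧
  (∀ i, |Polynomial.aeval ξ (P (i + 1))| < |Polynomial.aeval ξ (P i)|) ∧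
  (∀ i, ∀ Q : Polynomial ℤ, Q ≠ 0 → Q.natDegree ≤ n →
    |Polynomial.aeval ξ Q| < |Polynomial.aeval ξ (P i)| → heightZ (P (i + 1)) ≤ heightZ Q)

namespace Polynomial

section SupNorm

variable {A : Type*} [SeminormedRing A]

lemma supNorm_add_le (p q : A[X]) : (p + q).supNorm ≤ p.supNorm + q.supNorm := by
  obtain ⟨i, hi⟩ := (p + q).exists_eq_supNorm
  rw [hi, coeff_add]
  exact (norm_add_le _ _).trans (add_le_add (p.le_supNorm i) (q.le_supNorm i))

lemma supNorm_sub_le (p q : A[X]) : (p - q).supNorm ≤ p.supNorm + q.supNorm := by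
  obtain ⟨i, hi⟩ := (p - q).exists_eq_supNorm
  rw [hi, coeff_sub]
  exact (norm_sub_le _ _).trans (add_le_add (p.le_supNorm i) (q.le_supNorm i))

lemma supNorm_smul [NormMulClass A] (c : A) (p : A[X]) :
    (c • p).supNorm = ‖c‖ * p.supNorm := by
  apply le_antisymm
  · obtain ⟨i, hi⟩ := (c • p).exists_eq_supNorm
    rw [hi, coeff_smul, smul_eq_mul, norm_mul]
    exact mul_le_mul_of_nonneg_left (p.le_supNorm i) (norm_nonneg c)
  · obtain ⟨i, hi⟩ := p.exists_eq_supNorm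
    rw [hi, ← norm_mul, ← smul_eq_mul, ← coeff_smul]
    exact (c • p).le_supNorm i

lemma norm_mul_supNorm_le_of_smul_eq_add_smul [NormMulClass A] {a c : A} {p q r : A[X]}
    (h : a • p = q + c • r) : ‖a‖ * p.supNorm ≤ q.supNorm + ‖c‖ * r.supNorm := by
  rw [← supNorm_smul, ← supNorm_smul, h]
  exact supNorm_add_le q (c • r)

end SupNorm

end Polynomial

lemma heightR_eq_supNorm_s4 (P : ℝ[X]) : heightR P = P.supNorm := by
  simp [heightR, supNorm_eq_iSup]

lemma heightZ_eq_supNorm_toR (P : ℤ[X]) : heightZ P = (toR P).supNorm := by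
  simp [heightZ, toR, supNorm_eq_iSup]

lemma toR_sub_smul (Q R : ℤ[X]) (s : ℤ) : toR (Q - s • R) = toR Q - (s : ℝ) • toR R := by
  simp only [toR, Polynomial.map_sub, Polynomial.map_smul, eq_intCast]

lemma exists_int_abs_sub_mul_eq {a b : ℝ} (h : |b| ≤ |a|) :
    ∃ s : ℤ, |b - s * a| = |a| - |b| := by
  refine ⟨if 0 ≤ a * b then 1 else -1, ?_⟩
  split_ifs with hab
  · rw [Int.cast_one, one_mul]
    rcases abs_cases a with ⟨_, _⟩ | ⟨_, _⟩ <;>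
      rcases abs_cases b with ⟨_, _⟩ | ⟨_, _⟩ <;>
      rcases abs_cases (b - a) with ⟨_, _⟩ | ⟨_, _⟩ <;> nlinarith
  · rw [Int.cast_neg, Int.cast_one, neg_one_mul, sub_neg_eq_add]
    rcases abs_cases a with ⟨_, _⟩ | ⟨_, _⟩ <;>
      rcases abs_cases b with ⟨_, _⟩ | ⟨_, _⟩ <;>
      rcases abs_cases (b + a) with ⟨_, _⟩ | ⟨_, _⟩ <;> nlinarith

section CrossPoly

variable {n : ℕ} {ξ : ℝ} {P Q : ℤ[X]}

/-- `crossPoly ξ P_i P_{i+1}` is the polynomial `S_i` of the paper. -/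
noncomputable def crossPoly (ξ : ℝ) (P Q : ℤ[X]) : ℝ[X] :=
  aeval ξ P • toR Q - aeval ξ Q • toR P

lemma half_mul_heightR_crossPoly_le (hPQ : heightZ P ≤ heightZ Q)
    (hval : |aeval ξ Q| ≤ |aeval ξ P|) :
    1 / 2 * heightR (crossPoly ξ P Q) ≤ heightZ Q * |aeval ξ P| := by
  rw [heightZ_eq_supNorm_toR, heightZ_eq_supNorm_toR] at *
  rw [heightR_eq_supNorm_s4]
  have hP0 := (toR P).supNorm_nonneg
  have hS : (crossPoly ξ P Q).supNorm
      ≤ |aeval ξ P| * (toR Q).supNorm + |aeval ξ Q| * (toR P).supNorm := by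
    simpa only [crossPoly, supNorm_smul, Real.norm_eq_abs] using
      supNorm_sub_le (aeval ξ P • toR Q) (aeval ξ Q • toR P)
  nlinarith [abs_nonneg (aeval ξ Q)]

lemma heightZ_mul_abs_aeval_le_two_mul_heightR_crossPoly (hP : P.natDegree ≤ n)
    (hQ : Q.natDegree ≤ n) (hPQ : heightZ P < heightZ Q) (hval : |aeval ξ Q| < |aeval ξ P|)
    (hmin : ∀ D : ℤ[X], D ≠ 0 → D.natDegree ≤ n → |aeval ξ D| < |aeval ξ P| →
      heightZ Q ≤ heightZ D) :
    heightZ Q * |aeval ξ P| ≤ 2 * heightR (crossPoly ξ P Q) := by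
  set a := aeval ξ P
  set b := aeval ξ Q
  set S := crossPoly ξ P Q with hS_def
  simp only [heightZ_eq_supNorm_toR, heightR_eq_supNorm_s4] at hPQ hmin ⊢
  by_contra! hS
  have hP0 := (toR P).supNorm_nonneg
  have hS0 := S.supNorm_nonneg
  have hQ_le := norm_mul_supNorm_le_of_smul_eq_add_smul
    (show a • toR Q = S + b • toR P by rw [hS_def, crossPoly, sub_add_cancel])
  rw [Real.norm_eq_abs, Real.norm_eq_abs] at hQ_le
  have hab : |a| < 2 * |b| := by
    nlinarith [mul_le_mul_of_nonneg_left hPQ.le (abs_nonneg b)]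
  obtain ⟨s, hs⟩ := exists_int_abs_sub_mul_eq hval.le
  set D := Q - s • P with hD_def
  have hD_eval : aeval ξ D = b - s * a := by
    rw [map_sub, map_zsmul, zsmul_eq_mul]
  have hD_ne : D ≠ 0 := by
    intro h
    rw [h, map_zero] at hD_eval
    rw [← hD_eval, abs_zero] at hs
    linarith
  have hD_deg : D.natDegree ≤ n :=
    (natDegree_sub_le _ _).trans (max_le hQ ((natDegree_smul_le _ _).trans hP))
  have hQD := hmin D hD_ne hD_deg (by rw [hD_eval, hs]; linarith [abs_nonneg b])
  have hD_le := norm_mul_supNorm_le_of_smul_eq_add_smul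
    (show a • toR D = S + (b - s * a) • toR P by
      rw [hD_def, toR_sub_smul, hS_def, crossPoly]; module)
  rw [Real.norm_eq_abs, Real.norm_eq_abs, hs] at hD_le
  nlinarith

end CrossPoly

theorem height_S_bound_general (n : ℕ) (ξ : ℝ)
    (P : ℕ → Polynomial ℤ) (hP : IsMinimalSeq n ξ P) (i : ℕ) :
    (1 / 2 : ℝ) * heightR ((Polynomial.aeval ξ (P i)) • toR (P (i + 1)) -
        (Polynomial.aeval ξ (P (i + 1))) • toR (P i)) ≤
      heightZ (P (i + 1)) * |Polynomial.aeval ξ (P i)| ∧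
    heightZ (P (i + 1)) * |Polynomial.aeval ξ (P i)| ≤
      2 * heightR ((Polynomial.aeval ξ (P i)) • toR (P (i + 1)) -
        (Polynomial.aeval ξ (P (i + 1))) • toR (P i)) := by
  obtain ⟨-, hdeg, hheight, hval, hmin⟩ := hP
  exact ⟨half_mul_heightR_crossPoly_le (hheight i).le (hval i).le,
    heightZ_mul_abs_aeval_le_two_mul_heightR_crossPoly (hdeg i) (hdeg (i + 1)) (hheight i)
      (hval i) (hmin i)⟩

/-- The polynomial `S_i = P_i(ξ) P_{i+1} - P_{i+1}(ξ) P_i` satisfies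
`H(S_i)/2 ≤ H(P_{i+1}) |P_i(ξ)| ≤ 2 H(S_i)`. -/
theorem height_S_bound (n : ℕ) (hn : 1 ≤ n) (ξ : ℝ) (hξ : Transcendental ℚ ξ)
    (P : ℕ → Polynomial ℤ) (hP : IsMinimalSeq n ξ P) (i : ℕ) :
    (1 / 2 : ℝ) * heightR ((Polynomial.aeval ξ (P i)) • toR (P (i + 1)) -
        (Polynomial.aeval ξ (P (i + 1))) • toR (P i)) ≤
      heightZ (P (i + 1)) * |Polynomial.aeval ξ (P i)| ∧
    heightZ (P (i + 1)) * |Polynomial.aeval ξ (P i)| ≤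
      2 * heightR ((Polynomial.aeval ξ (P i)) • toR (P (i + 1)) -
        (Polynomial.aeval ξ (P (i + 1))) • toR (P i)) :=
  height_S_bound_general n ξ P hP i
end

section
/- Let $n \geq 1$ and let $\mathcal{A} \subset \mathbb{R}[X]_{\leq n}$ contain a non-zero polynomial. For $k \geq n$ define $V_k(\mathcal{A})$ as the real span of all polynomials $X^j Q$ with $Q \in \mathcal{A} \setminus \{0\}$ and $0 \leq j \leq k - \deg Q$, and set $g(k) = \dim V_k(\mathcal{A})$. Then $g$ is strictly increasing and concave on $\{n, n+1, \dots\}$, i.e. $g(i) - g(i-1) \geq g(i+1) - g(i)$ for all $i > n$. -/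
open Polynomial

/-- The span `V_k(𝒜)` of the polynomials `X^j Q` for `Q ∈ 𝒜 \ {0}` and
`0 ≤ j ≤ k - deg Q`. -/
noncomputable def Vk (A : Set (Polynomial ℝ)) (k : ℕ) : Submodule ℝ (Polynomial ℝ) :=
  Submodule.span ℝ
    {R : Polynomial ℝ | ∃ Q ∈ A, Q ≠ 0 ∧ ∃ j ≤ k - Q.natDegree, R = Polynomial.X ^ j * Q}

/-- Multiplication by `X` as a linear map. -/
noncomputable def mulX : Polynomial ℝ →ₗ[ℝ] Polynomial ℝ := LinearMap.mulLeft ℝ X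

lemma mulX_inj : Function.Injective mulX :=
  mul_right_injective₀ X_ne_zero

lemma Vk_le_degreeLT (n : ℕ) (A : Set (Polynomial ℝ)) (hdeg : ∀ Q ∈ A, Q.natDegree ≤ n)
    {k : ℕ} (hk : n ≤ k) : Vk A k ≤ degreeLT ℝ (k + 1) := by
  rw [Vk, Submodule.span_le]
  rintro R ⟨Q, hQA, hQ0, j, hj, rfl⟩
  have hd : Q.natDegree ≤ k := (hdeg Q hQA).trans hk
  have hne : X ^ j * Q ≠ 0 := mul_ne_zero (pow_ne_zero _ X_ne_zero) hQ0
  have : (X ^ j * Q).natDegree = j + Q.natDegree := by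
    rw [natDegree_mul (pow_ne_zero _ X_ne_zero) hQ0, natDegree_X_pow]
  simp only [SetLike.mem_coe, Polynomial.mem_degreeLT]
  calc (X ^ j * Q).degree = ((X ^ j * Q).natDegree : WithBot ℕ) := degree_eq_natDegree hne
    _ < ((k + 1 : ℕ) : WithBot ℕ) := by
        rw [this]
        exact_mod_cast Nat.lt_succ_of_le (by omega)

lemma Vk_fd (n : ℕ) (A : Set (Polynomial ℝ)) (hdeg : ∀ Q ∈ A, Q.natDegree ≤ n)
    {k : ℕ} (hk : n ≤ k) : FiniteDimensional ℝ (Vk A k) := by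
  have : FiniteDimensional ℝ (degreeLT ℝ (k + 1) : Submodule ℝ (Polynomial ℝ)) :=
    Module.Finite.equiv (degreeLTEquiv ℝ (k + 1)).symm
  exact Submodule.finiteDimensional_of_le (Vk_le_degreeLT n A hdeg hk)

lemma Vk_mono (A : Set (Polynomial ℝ)) {k l : ℕ} (hkl : k ≤ l) : Vk A k ≤ Vk A l := by
  apply Submodule.span_mono
  rintro R ⟨Q, hQA, hQ0, j, hj, rfl⟩
  exact ⟨Q, hQA, hQ0, j, hj.trans (Nat.sub_le_sub_right hkl _), rfl⟩

lemma mulX_Vk_le (n : ℕ) (A : Set (Polynomial ℝ)) (hdeg : ∀ Q ∈ A, Q.natDegree ≤ n)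
    {k : ℕ} (hk : n ≤ k) : (Vk A k).map mulX ≤ Vk A (k + 1) := by
  rw [Vk, Submodule.map_span, Submodule.span_le]
  rintro R ⟨S, ⟨Q, hQA, hQ0, j, hj, rfl⟩, rfl⟩
  apply Submodule.subset_span
  have hd : Q.natDegree ≤ k := (hdeg Q hQA).trans hk
  refine ⟨Q, hQA, hQ0, j + 1, ?_, ?_⟩
  · omega
  · simp [mulX, LinearMap.mulLeft_apply, pow_succ, mul_comm, mul_assoc, mul_left_comm]

lemma Vk_succ_le (n : ℕ) (A : Set (Polynomial ℝ)) (hdeg : ∀ Q ∈ A, Q.natDegree ≤ n)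
    {k : ℕ} (hk : n ≤ k) : Vk A (k + 1) ≤ Vk A k ⊔ (Vk A k).map mulX := by
  rw [Vk, Submodule.span_le]
  rintro R ⟨Q, hQA, hQ0, j, hj, rfl⟩
  have hd : Q.natDegree ≤ k := (hdeg Q hQA).trans hk
  rcases j with _ | j'
  · apply Submodule.mem_sup_left
    exact Submodule.subset_span ⟨Q, hQA, hQ0, 0, Nat.zero_le _, rfl⟩
  · apply Submodule.mem_sup_right
    refine ⟨X ^ j' * Q, Submodule.subset_span ⟨Q, hQA, hQ0, j', by omega, rfl⟩, ?_⟩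
    simp [mulX, LinearMap.mulLeft_apply, pow_succ, mul_comm, mul_assoc, mul_left_comm]

/-- `g(k) = dim V_k(𝒜)` is strictly increasing and concave on `{n, n+1, …}`. -/
theorem g_strictMono_concave (n : ℕ) (hn : 1 ≤ n) (A : Set (Polynomial ℝ))
    (hdeg : ∀ Q ∈ A, Q.natDegree ≤ n) (hne : ∃ Q ∈ A, Q ≠ 0) :
    (∀ k, n ≤ k → Module.finrank ℝ (Vk A k) < Module.finrank ℝ (Vk A (k + 1))) ∧
    (∀ i, n ≤ i → Module.finrank ℝ (Vk A i) + Module.finrank ℝ (Vk A (i + 2)) ≤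
      2 * Module.finrank ℝ (Vk A (i + 1))) := by
  obtain ⟨Q₀, hQ₀A, hQ₀⟩ := hne
  constructor
  · intro k hk
    have : FiniteDimensional ℝ (Vk A (k + 1)) := Vk_fd n A hdeg (by omega)
    apply Submodule.finrank_lt_finrank_of_lt
    refine lt_of_le_of_ne (Vk_mono A (Nat.le_succ k)) ?_
    intro heq
    have hd : Q₀.natDegree ≤ k := (hdeg Q₀ hQ₀A).trans hk
    have hmem : X ^ (k + 1 - Q₀.natDegree) * Q₀ ∈ Vk A (k + 1) :=
      Submodule.subset_span ⟨Q₀, hQ₀A, hQ₀, _, le_refl _, rfl⟩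
    rw [← heq] at hmem
    have := Vk_le_degreeLT n A hdeg hk hmem
    rw [Polynomial.mem_degreeLT] at this
    have hdeg' : (X ^ (k + 1 - Q₀.natDegree) * Q₀).degree = ((k + 1 : ℕ) : WithBot ℕ) := by
      rw [degree_eq_natDegree (mul_ne_zero (pow_ne_zero _ X_ne_zero) hQ₀),
        natDegree_mul (pow_ne_zero _ X_ne_zero) hQ₀, natDegree_X_pow]
      norm_cast
      omega
    rw [hdeg'] at this
    exact lt_irrefl _ this
  · intro i hi
    have h1 : FiniteDimensional ℝ (Vk A (i + 1)) := Vk_fd n A hdeg (by omega)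
    have h2 : FiniteDimensional ℝ ((Vk A (i + 1)).map mulX) := Module.Finite.map _ _
    have hXle : (Vk A i).map mulX ≤ Vk A (i + 1) ⊓ (Vk A (i + 1)).map mulX := by
      refine le_inf (mulX_Vk_le n A hdeg hi) (Submodule.map_mono (Vk_mono A (Nat.le_succ i)))
    have hfdinf : FiniteDimensional ℝ (Vk A (i + 1) ⊓ (Vk A (i + 1)).map mulX :
        Submodule ℝ (Polynomial ℝ)) := Submodule.finiteDimensional_of_le inf_le_left
    have key := Submodule.finrank_sup_add_finrank_inf_eq (Vk A (i + 1))
      ((Vk A (i + 1)).map mulX)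
    have hXrank : Module.finrank ℝ ((Vk A (i + 1)).map mulX) = Module.finrank ℝ (Vk A (i + 1)) :=
      (Submodule.equivMapOfInjective mulX mulX_inj (Vk A (i + 1))).finrank_eq.symm
    have hXrank' : Module.finrank ℝ ((Vk A i).map mulX) = Module.finrank ℝ (Vk A i) :=
      (Submodule.equivMapOfInjective mulX mulX_inj (Vk A i)).finrank_eq.symm
    have hfdsup : FiniteDimensional ℝ (Vk A (i + 1) ⊔ (Vk A (i + 1)).map mulX :
        Submodule ℝ (Polynomial ℝ)) := Submodule.finiteDimensional_sup _ _
    have hle2 : Vk A (i + 2) ≤ Vk A (i + 1) ⊔ (Vk A (i + 1)).map mulX :=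
      Vk_succ_le n A hdeg (by omega)
    have hA : Module.finrank ℝ (Vk A (i + 2)) ≤
        Module.finrank ℝ (Vk A (i + 1) ⊔ (Vk A (i + 1)).map mulX : Submodule ℝ (Polynomial ℝ)) :=
      Submodule.finrank_mono hle2
    have hB : Module.finrank ℝ (Vk A i) ≤
        Module.finrank ℝ (Vk A (i + 1) ⊓ (Vk A (i + 1)).map mulX : Submodule ℝ (Polynomial ℝ)) := by
      rw [← hXrank']
      exact Submodule.finrank_mono hXle
    omega
end

section
/- Let $n \geq 1$ and let $P, Q \in \mathbb{R}[X]_{\leq n}$ be two coprime polynomials. For each $j \in \{0, \dots, n-1\}$, the real vector space spanned by the polynomials $X^a P$ for $0 \leq a \leq n+j - \deg P$ and $X^b Q$ for $0 \leq b \leq n+j - \deg Q$ has dimension at least $2(j+1)$. In particular, for $j = n-1$ this span equals $\mathbb{R}[X]_{\leq 2n-1}$. -/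
open Polynomial

private lemma mulP_mem_span {P : Polynomial ℝ} {T : Set (Polynomial ℝ)} {d : ℕ}
    (hT : ∀ a ≤ d, (X : Polynomial ℝ) ^ a * P ∈ T) (A : Polynomial ℝ)
    (hA : A.natDegree ≤ d) : A * P ∈ Submodule.span ℝ T := by
  rw [Polynomial.as_sum_range' A (d + 1) (Nat.lt_succ_of_le hA), Finset.sum_mul]
  refine Submodule.sum_mem _ fun i hi => ?_
  have hid : i ≤ d := Nat.lt_succ_iff.mp (Finset.mem_range.mp hi)
  rw [← C_mul_X_pow_eq_monomial, mul_assoc, C_mul']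
  exact Submodule.smul_mem _ _ (Submodule.subset_span (hT i hid))

private lemma span_le_degreeLE (P Q : Polynomial ℝ) (m : ℕ)
    (hP : P.natDegree ≤ m) (hQ : Q.natDegree ≤ m) :
    Submodule.span ℝ {R : Polynomial ℝ |
        (∃ a ≤ m - P.natDegree, R = (X : Polynomial ℝ) ^ a * P) ∨
        (∃ b ≤ m - Q.natDegree, R = (X : Polynomial ℝ) ^ b * Q)}
      ≤ degreeLE ℝ (m : WithBot ℕ) := by
  rw [Submodule.span_le]
  rintro R (⟨a, ha, rfl⟩ | ⟨b, hb, rfl⟩) <;>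
  · rw [SetLike.mem_coe, mem_degreeLE]
    refine degree_le_of_natDegree_le (natDegree_mul_le.trans ?_)
    rw [natDegree_X_pow]
    omega

private lemma fd_degreeLE (m : ℕ) :
    FiniteDimensional ℝ (degreeLE ℝ (m : WithBot ℕ)) := by
  rw [← degreeLT_succ_eq_degreeLE]
  exact (degreeLTEquiv ℝ (m + 1)).symm.finiteDimensional

private lemma finrank_degreeLE (m : ℕ) :
    Module.finrank ℝ (degreeLE ℝ (m : WithBot ℕ)) = m + 1 := by
  rw [← degreeLT_succ_eq_degreeLE, (degreeLTEquiv ℝ (m + 1)).finrank_eq,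
    Module.finrank_fin_fun]

private lemma span_eq_degreeLE_s8 (P Q : Polynomial ℝ) (hcop : IsCoprime P Q) (m : ℕ)
    (hP : P.natDegree ≤ m) (hQ : Q.natDegree ≤ m)
    (hsum : P.natDegree + Q.natDegree ≤ m + 1) :
    Submodule.span ℝ {R : Polynomial ℝ |
        (∃ a ≤ m - P.natDegree, R = (X : Polynomial ℝ) ^ a * P) ∨
        (∃ b ≤ m - Q.natDegree, R = (X : Polynomial ℝ) ^ b * Q)}
      = degreeLE ℝ (m : WithBot ℕ) := by
  set T : Set (Polynomial ℝ) := {R : Polynomial ℝ |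
        (∃ a ≤ m - P.natDegree, R = (X : Polynomial ℝ) ^ a * P) ∨
        (∃ b ≤ m - Q.natDegree, R = (X : Polynomial ℝ) ^ b * Q)} with hTdef
  have hTP : ∀ a ≤ m - P.natDegree, (X : Polynomial ℝ) ^ a * P ∈ T :=
    fun a ha => Or.inl ⟨a, ha, rfl⟩
  have hTQ : ∀ b ≤ m - Q.natDegree, (X : Polynomial ℝ) ^ b * Q ∈ T :=
    fun b hb => Or.inr ⟨b, hb, rfl⟩
  refine le_antisymm (span_le_degreeLE P Q m hP hQ) ?_
  have key : ∀ i ≤ m, (X : Polynomial ℝ) ^ i ∈ Submodule.span ℝ T := by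
    intro i hi
    by_cases hQ0 : Q = 0
    · have hu : IsUnit P := isCoprime_zero_right.mp (hQ0 ▸ hcop)
      obtain ⟨c, hc, hcP⟩ := Polynomial.isUnit_iff.mp hu
      have hPd : P.natDegree = 0 := by rw [← hcP]; exact natDegree_C c
      have h1 : c⁻¹ • ((X : Polynomial ℝ) ^ i * P) = X ^ i := by
        rw [← hcP, mul_comm, C_mul', smul_smul, inv_mul_cancel₀ hc.ne_zero, one_smul]
      rw [← h1]
      exact Submodule.smul_mem _ _
        (Submodule.subset_span (hTP i (by omega)))
    · obtain ⟨u, v, huv⟩ := hcop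
      set r := ((X : Polynomial ℝ) ^ i * u) % Q with hrdef
      set s := ((X : Polynomial ℝ) ^ i * u) / Q with hsdef
      set w := s * P + (X : Polynomial ℝ) ^ i * v with hwdef
      have hdr : degree r < degree Q := EuclideanDomain.mod_lt _ hQ0
      have hid : (X : Polynomial ℝ) ^ i * u = Q * s + r :=
        (EuclideanDomain.div_add_mod _ _).symm
      have hiden : (X : Polynomial ℝ) ^ i = r * P + w * Q := by
        have h2 : (X : Polynomial ℝ) ^ i = (X ^ i * u) * P + (X ^ i * v) * Q := by
          calc (X : Polynomial ℝ) ^ i = X ^ i * (u * P + v * Q) := by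
                rw [huv, mul_one]
            _ = _ := by ring
        rw [h2, hid, hwdef]; ring
      have hr : r.natDegree ≤ m - P.natDegree := by
        by_cases hr0 : r = 0
        · simp [hr0]
        · have := natDegree_lt_natDegree hr0 hdr
          omega
      have hrP : r * P ∈ Submodule.span ℝ T := mulP_mem_span hTP r hr
      have hwQ_deg : (w * Q).natDegree ≤ m := by
        have h3 : w * Q = (X : Polynomial ℝ) ^ i - r * P := by
          rw [hiden]; ring
        rw [h3]
        refine (natDegree_sub_le _ _).trans (max_le ?_ ?_)
        · rw [natDegree_X_pow]; exact hi
        · exact natDegree_mul_le.trans (by omega)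
      have hwd : w.natDegree ≤ m - Q.natDegree := by
        by_cases hw0 : w = 0
        · simp [hw0]
        · have := natDegree_mul hw0 hQ0
          omega
      have hwQ : w * Q ∈ Submodule.span ℝ T := mulP_mem_span hTQ w hwd
      rw [hiden]
      exact Submodule.add_mem _ hrP hwQ
  intro p hp
  have hpd : p.natDegree ≤ m := natDegree_le_iff_degree_le.mpr (mem_degreeLE.mp hp)
  rw [Polynomial.as_sum_range' p (m + 1) (Nat.lt_succ_of_le hpd)]
  refine Submodule.sum_mem _ fun i hi => ?_
  rw [← C_mul_X_pow_eq_monomial, C_mul']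
  exact Submodule.smul_mem _ _ (key i (Nat.lt_succ_iff.mp (Finset.mem_range.mp hi)))

private lemma lower_bound_case2 (P Q : Polynomial ℝ) (hcop : IsCoprime P Q) (j : ℕ)
    (hPj : j + 2 ≤ P.natDegree) (hQj : j + 2 ≤ Q.natDegree) {T : Set (Polynomial ℝ)}
    (hTP : ∀ a ≤ j, (X : Polynomial ℝ) ^ a * P ∈ T)
    (hTQ : ∀ b ≤ j, (X : Polynomial ℝ) ^ b * Q ∈ T)
    [FiniteDimensional ℝ (Submodule.span ℝ T)] :
    2 * (j + 1) ≤ Module.finrank ℝ (Submodule.span ℝ T) := by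
  haveI : FiniteDimensional ℝ (degreeLT ℝ (j + 1)) :=
    (degreeLTEquiv ℝ (j + 1)).symm.finiteDimensional
  set ψ : (degreeLT ℝ (j + 1) × degreeLT ℝ (j + 1)) →ₗ[ℝ] Polynomial ℝ :=
    LinearMap.coprod ((LinearMap.mulRight ℝ P).comp (Submodule.subtype _))
      ((LinearMap.mulRight ℝ Q).comp (Submodule.subtype _)) with hψ
  have hψ_apply : ∀ x : degreeLT ℝ (j + 1) × degreeLT ℝ (j + 1),
      ψ x = (x.1 : Polynomial ℝ) * P + (x.2 : Polynomial ℝ) * Q := by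
    intro x
    simp [hψ]
  have hdeg : ∀ A : Polynomial ℝ, A ∈ degreeLT ℝ (j + 1) → A.natDegree ≤ j := by
    intro A hA
    by_cases hA0 : A = 0
    · simp [hA0]
    · exact Nat.lt_succ_iff.mp
        ((natDegree_lt_iff_degree_lt hA0).mpr (mem_degreeLT.mp hA))
  have hQ0 : Q ≠ 0 := by
    intro h
    rw [h, natDegree_zero] at hQj
    omega
  have hinj : Function.Injective ψ := by
    rw [← LinearMap.ker_eq_bot]
    rw [Submodule.eq_bot_iff]
    rintro ⟨⟨A, hA⟩, ⟨B, hB⟩⟩ hx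
    have h : A * P + B * Q = 0 := by
      have := hψ_apply ⟨⟨A, hA⟩, ⟨B, hB⟩⟩
      rw [LinearMap.mem_ker] at hx
      rw [hx] at this
      exact this.symm
    have hdvd : Q ∣ A := hcop.symm.dvd_of_dvd_mul_right ⟨-B, by linear_combination h⟩
    have hA0 : A = 0 := by
      by_contra hA0
      have := natDegree_le_of_dvd hdvd hA0
      have := hdeg A hA
      omega
    have hB0 : B = 0 := by
      rw [hA0, zero_mul, zero_add] at h
      rcases mul_eq_zero.mp h with h' | h'
      · exact h'
      · exact absurd h' hQ0
    simp [Prod.ext_iff, Subtype.ext_iff, hA0, hB0]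
  have hrange : LinearMap.range ψ ≤ Submodule.span ℝ T := by
    rintro _ ⟨x, rfl⟩
    rw [hψ_apply]
    exact Submodule.add_mem _
      (mulP_mem_span hTP _ (hdeg _ x.1.2))
      (mulP_mem_span hTQ _ (hdeg _ x.2.2))
  have hdom : Module.finrank ℝ (degreeLT ℝ (j + 1) × degreeLT ℝ (j + 1)) = 2 * (j + 1) := by
    rw [Module.finrank_prod, (degreeLTEquiv ℝ (j + 1)).finrank_eq, Module.finrank_fin_fun]
    ring
  calc 2 * (j + 1) = Module.finrank ℝ (degreeLT ℝ (j + 1) × degreeLT ℝ (j + 1)) := hdom.symm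
    _ = Module.finrank ℝ (LinearMap.range ψ) := (LinearMap.finrank_range_of_inj hinj).symm
    _ ≤ Module.finrank ℝ (Submodule.span ℝ T) := Submodule.finrank_mono hrange

/-- For coprime `P, Q ∈ ℝ[X]_{≤ n}`, the span of the `X^a P` (`a ≤ n+j - deg P`) and
`X^b Q` (`b ≤ n+j - deg Q`) has dimension at least `2(j+1)`, and for `j = n-1` it is
all of `ℝ[X]_{≤ 2n-1}`. -/
theorem span_coprime_dim (n : ℕ) (hn : 1 ≤ n) (P Q : Polynomial ℝ)
    (hP : P.natDegree ≤ n) (hQ : Q.natDegree ≤ n) (hcop : IsCoprime P Q) :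
    (∀ j : ℕ, j ≤ n - 1 →
      2 * (j + 1) ≤ Module.finrank ℝ (Submodule.span ℝ
        {R : Polynomial ℝ |
          (∃ a ≤ n + j - P.natDegree, R = Polynomial.X ^ a * P) ∨
          (∃ b ≤ n + j - Q.natDegree, R = Polynomial.X ^ b * Q)})) ∧
    Submodule.span ℝ
        {R : Polynomial ℝ |
          (∃ a ≤ n + (n - 1) - P.natDegree, R = Polynomial.X ^ a * P) ∨
          (∃ b ≤ n + (n - 1) - Q.natDegree, R = Polynomial.X ^ b * Q)} =
      Polynomial.degreeLE ℝ ((2 * n - 1 : ℕ) : WithBot ℕ) := by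
  constructor
  · intro j hj
    by_cases hcase : P.natDegree + Q.natDegree ≤ n + j + 1
    · rw [span_eq_degreeLE_s8 P Q hcop (n + j) (by omega) (by omega) hcase,
        finrank_degreeLE]
      omega
    · haveI := fd_degreeLE (n + j)
      haveI : FiniteDimensional ℝ (Submodule.span ℝ
          {R : Polynomial ℝ |
            (∃ a ≤ n + j - P.natDegree, R = Polynomial.X ^ a * P) ∨
            (∃ b ≤ n + j - Q.natDegree, R = Polynomial.X ^ b * Q)}) :=
        Submodule.finiteDimensional_of_le (span_le_degreeLE P Q (n + j) (by omega) (by omega))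
      exact lower_bound_case2 P Q hcop j (by omega) (by omega)
        (fun a ha => Or.inl ⟨a, by omega, rfl⟩)
        (fun b hb => Or.inr ⟨b, by omega, rfl⟩)
  · have h := span_eq_degreeLE_s8 P Q hcop (n + (n - 1)) (by omega) (by omega) (by omega)
    rw [h]
    congr 1
    norm_cast
    omega
end

section
/- Let $n \geq 1$ and $0 \leq k \leq n$ be integers, and let $\mathcal{A}$ be a set of $k+1$ linearly independent polynomials in $\mathbb{R}[X]_{\leq n}$ whose greatest common divisor is $1$ (equivalently, the ideal they generate is all of $\mathbb{R}[X]$). Then the real span of all polynomials $X^j Q$ with $Q \in \mathcal{A}$ and $0 \leq j \leq 2n - k - \deg Q$ equals $\mathbb{R}[X]_{\leq 2n-k}$. -/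
/-!
Dually, it suffices to show that a linear form on `ℝ[X]_{≤ m}`, `m = 2n - k`, which kills every
`X ^ j * Q` is zero. Such a form is `P ↦ (P * L).coeff m` for some `L` of degree `≤ m`, and
killing the `X ^ j * Q` says that every `Q ∈ 𝒜` is the denominator of a Padé-type approximant
`R / Q` of `L` modulo `X ^ (m + 1)`, i.e. `Q * L ≡ R` with `deg R < deg Q`.

Let `F` be such a denominator of minimal degree `c`. Two approximants whose denominators have
degrees summing to at most `m + 1` coincide, and minimality then forces `F ∣ Q`. Hence if
`c + n ≤ m + 1`, `F` divides all of `𝒜`, so it is a unit and `L = 0`. Otherwise consider the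
space of `p` of degree `≤ n` with `p * L ≡ r_p`, `deg r_p < n`; it contains `𝒜`. On it the
linear map `p ↦ p * R_F - F * r_p` has kernel inside `F • ℝ[X]_{≤ n - c}` and image inside
`X ^ (m + 1) • ℝ[X]_{< n + c - m - 1}`, so the space has dimension at most `2n - m = k`,
contradicting the independence of the `k + 1` elements of `𝒜`.
-/

open Polynomial Module Finset

theorem isUnit_of_forall_dvd_of_span_eq_top {R : Type*} [CommRing R] {s : Set R} {F : R}
    (hs : Ideal.span s = ⊤) (h : ∀ Q ∈ s, F ∣ Q) : IsUnit F := by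
  rw [← Ideal.span_singleton_eq_top, eq_top_iff, ← hs, Ideal.span_le]
  exact fun Q hQ => Ideal.mem_span_singleton.mpr (h Q hQ)

namespace Polynomial

section CommRing

variable {R : Type*} [CommRing R]

theorem exists_coeff_mul_eq (f : R[X] →ₗ[R] R) (m : ℕ) :
    ∃ L : R[X], L.degree ≤ m ∧ ∀ P : R[X], P.natDegree ≤ m → (P * L).coeff m = f P := by
  set L : R[X] := ∑ j ∈ range (m + 1), C (f (X ^ (m - j))) * X ^ j
  have hL : ∀ i ≤ m, L.coeff (m - i) = f (X ^ i) := fun i hi => by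
    simp [L, Nat.sub_sub_self hi, Nat.lt_succ_of_le (Nat.sub_le m i)]
  refine ⟨L, mem_degreeLE.mp ((degreeLE R m).sum_mem fun j hj => ?_), fun P hP => ?_⟩
  · rw [mem_degreeLE, C_mul_X_pow_eq_monomial]
    exact (degree_monomial_le _ _).trans (by exact_mod_cast Nat.lt_succ_iff.mp (mem_range.mp hj))
  · conv_rhs => rw [P.as_sum_range_C_mul_X_pow' (Nat.lt_succ_of_le hP)]
    rw [coeff_mul, Nat.sum_antidiagonal_eq_sum_range_succ (fun i j => P.coeff i * L.coeff j),
      map_sum]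
    refine sum_congr rfl fun i hi => ?_
    rw [hL i (Nat.lt_succ_iff.mp (mem_range.mp hi)), ← smul_eq_C_mul, map_smul, smul_eq_mul]

theorem degree_modByMonic_X_pow_lt [Nontrivial R] {p : R[X]} {d m : ℕ}
    (h : ∀ t, d ≤ t → t ≤ m → p.coeff t = 0) : (p %ₘ X ^ (m + 1)).degree < d := by
  rw [degree_lt_iff_coeff_zero]
  intro t ht
  rcases le_or_gt t m with htm | htm
  · have hcoeff := X_pow_dvd_iff.mp (dvd_modByMonic_sub p (X ^ (m + 1))) t (by omega)
    rw [coeff_sub, sub_eq_zero] at hcoeff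
    rw [hcoeff, h t ht htm]
  · refine coeff_eq_zero_of_degree_lt ((degree_modByMonic_lt _ (monic_X_pow _)).trans_le ?_)
    rw [degree_X_pow]
    exact_mod_cast htm

instance (d : ℕ) : Module.Finite R (degreeLT R d) :=
  Module.Finite.equiv (degreeLTEquiv R d).symm

theorem finrank_degreeLT [Nontrivial R] (d : ℕ) : finrank R (degreeLT R d) = d := by
  rw [(degreeLTEquiv R d).finrank_eq, finrank_fin_fun]

theorem finrank_map_degreeLT_le [Nontrivial R] (F : R[X]) (d : ℕ) :
    finrank R ((degreeLT R d).map (LinearMap.mulLeft R F)) ≤ d :=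
  (Submodule.finrank_map_le _ _).trans (finrank_degreeLT d).le

variable [NoZeroDivisors R]

theorem degree_mul_lt_add {p q : R[X]} {a b : WithBot ℕ} (ha : a ≠ ⊥) (hp : p.degree ≤ a)
    (hq : q.degree < b) : (p * q).degree < a + b := by
  rcases eq_or_ne p 0 with rfl | hp0
  · rw [zero_mul, degree_zero, bot_lt_iff_ne_bot]
    exact WithBot.add_ne_bot.mpr ⟨ha, (bot_le.trans_lt hq).ne'⟩
  · rw [degree_mul]
    exact WithBot.add_lt_add_of_le_of_lt (degree_eq_bot.not.mpr hp0) hp hq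

theorem degree_lt_of_mul_eq_mul {a b c d : R[X]} (h : a * b = c * d) (hc : c ≠ 0)
    (hdb : d.degree < b.degree) : a.degree < c.degree := by
  have hb : b.degree ≠ ⊥ := (bot_le.trans_lt hdb).ne'
  have hdeg := congrArg degree h
  rw [degree_mul, degree_mul] at hdeg
  rw [← WithBot.add_lt_add_iff_right hb, hdeg]
  exact WithBot.add_lt_add_left (degree_eq_bot.not.mpr hc) hdb

theorem mem_map_mulLeft_degreeLT_of_dvd {M q : R[X]} {d : ℕ} (hdvd : M ∣ q)
    (hq : q.degree < (d + M.natDegree : ℕ)) :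
    q ∈ (degreeLT R d).map (LinearMap.mulLeft R M) := by
  obtain ⟨g, rfl⟩ := hdvd
  rcases eq_or_ne (M * g) 0 with h0 | h0
  · rw [h0]
    exact Submodule.zero_mem _
  refine ⟨g, mem_degreeLT.mpr ?_, rfl⟩
  have hg : g ≠ 0 := right_ne_zero_of_mul h0
  rw [degree_eq_natDegree h0, natDegree_mul (left_ne_zero_of_mul h0) hg, Nat.cast_lt] at hq
  rw [degree_eq_natDegree hg, Nat.cast_lt]
  omega

end CommRing

variable {K : Type*} [Field K] {M L : K[X]}

/-- `R / P` is a Padé-type approximant of `L` modulo `M`. -/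
def IsPadeDenom (M L P : K[X]) : Prop :=
  ∃ R : K[X], R.degree < P.degree ∧ M ∣ P * L - R

theorem isPadeDenom_of_coeff_eq_zero {m : ℕ} {P : K[X]} (hP : P ≠ 0)
    (h : ∀ t, P.natDegree ≤ t → t ≤ m → (P * L).coeff t = 0) :
    IsPadeDenom (X ^ (m + 1)) L P := by
  refine ⟨(P * L) %ₘ X ^ (m + 1), ?_, dvd_sub_comm.mp (dvd_modByMonic_sub _ _)⟩
  rw [degree_eq_natDegree hP]
  exact degree_modByMonic_X_pow_lt h

theorem exists_isPadeDenom_minimal {P : K[X]} (hP : IsPadeDenom M L P) :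
    ∃ F, IsPadeDenom M L F ∧ ∀ P, IsPadeDenom M L P → F.natDegree ≤ P.natDegree := by
  classical
  have h : ∃ d, ∃ P, IsPadeDenom M L P ∧ P.natDegree = d := ⟨_, P, hP, rfl⟩
  obtain ⟨F, hF, hFd⟩ := Nat.find_spec h
  exact ⟨F, hF, fun P hP => hFd ▸ Nat.find_min' h ⟨P, hP, rfl⟩⟩

theorem eq_zero_of_isPadeDenom_of_isUnit {P : K[X]} (hL : L.degree < M.degree)
    (hP : IsPadeDenom M L P) (hu : IsUnit P) : L = 0 := by
  obtain ⟨R, hR, hdvd⟩ := hP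
  rw [degree_eq_zero_of_isUnit hu] at hR
  have hR0 : R = 0 := by simpa using mt zero_le_degree_iff.mpr hR.not_ge
  rw [hR0, sub_zero, hu.dvd_mul_left] at hdvd
  exact eq_zero_of_dvd_of_degree_lt hdvd hL

theorem mul_eq_mul_of_dvd_sub {P₁ P₂ R₁ R₂ : K[X]} (hR₁ : R₁.degree < P₁.degree)
    (hR₂ : R₂.degree < P₂.degree) (h₁ : M ∣ P₁ * L - R₁) (h₂ : M ∣ P₂ * L - R₂)
    (hdeg : P₁.degree + P₂.degree ≤ M.degree) : P₁ * R₂ = P₂ * R₁ := by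
  have hdvd : M ∣ P₁ * R₂ - P₂ * R₁ := by
    have : P₁ * R₂ - P₂ * R₁ = P₂ * (P₁ * L - R₁) - P₁ * (P₂ * L - R₂) := by ring
    rw [this]
    exact dvd_sub (h₁.mul_left _) (h₂.mul_left _)
  have hP₁ : P₁.degree ≠ ⊥ := (bot_le.trans_lt hR₁).ne'
  have hP₂ : P₂.degree ≠ ⊥ := (bot_le.trans_lt hR₂).ne'
  refine sub_eq_zero.mp (eq_zero_of_dvd_of_degree_lt hdvd ((degree_sub_le _ _).trans_lt ?_))
  refine max_lt (degree_mul_lt_add hP₁ le_rfl hR₂) ?_ |>.trans_le hdeg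
  rw [add_comm]
  exact degree_mul_lt_add hP₂ le_rfl hR₁

theorem dvd_of_mul_eq_mul {F R p r : K[X]}
    (hmin : ∀ P, IsPadeDenom M L P → F.natDegree ≤ P.natDegree)
    (hR : R.degree < F.degree) (hF : M ∣ F * L - R) (hp : M ∣ p * L - r)
    (h : p * R = F * r) : F ∣ p := by
  set s := p / F
  set t := p % F
  have hpst : p = F * s + t := (EuclideanDomain.div_add_mod p F).symm
  -- otherwise `t = p % F` is a Padé-type denominator of smaller degree than `F`
  by_contra hdvd
  have ht : t ≠ 0 := fun h0 => hdvd (EuclideanDomain.mod_eq_zero.mp h0)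
  have hmul : (r - s * R) * F = t * R := by linear_combination -h + R * hpst
  have hres : M ∣ t * L - (r - s * R) := by
    have : t * L - (r - s * R) = (p * L - r) - s * (F * L - R) := by rw [hpst]; ring
    rw [this]
    exact dvd_sub hp (hF.mul_left _)
  have hle := hmin t ⟨_, degree_lt_of_mul_eq_mul hmul ht hR, hres⟩
  have hlt := natDegree_lt_natDegree ht (degree_mod_lt p (ne_zero_of_degree_gt hR))
  omega

noncomputable def padeSpace (M L : K[X]) (n : ℕ) : Submodule K K[X] :=
  degreeLE K n ⊓ (degreeLT K n).comap ((modByMonicHom M).comp (LinearMap.mulRight K L))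

theorem mem_padeSpace {n : ℕ} {p : K[X]} :
    p ∈ padeSpace M L n ↔ p.degree ≤ n ∧ ((p * L) %ₘ M).degree < n := by
  simp [padeSpace, mem_degreeLE, mem_degreeLT]

instance (n : ℕ) : Module.Finite K (padeSpace M L n) := by
  refine Submodule.finiteDimensional_of_le (S₂ := degreeLT K (n + 1)) fun p hp => ?_
  rw [degreeLT_succ_eq_degreeLE]
  exact (Submodule.mem_inf.mp hp).1

theorem IsPadeDenom.mem_padeSpace {n : ℕ} {P : K[X]} (hM : M.Monic) (hP : IsPadeDenom M L P)
    (hn : P.natDegree ≤ n) : P ∈ padeSpace M L n := by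
  obtain ⟨R, hR, hdvd⟩ := hP
  refine Polynomial.mem_padeSpace.mpr ⟨degree_le_of_natDegree_le hn, ?_⟩
  rw [modByMonic_eq_of_dvd_sub hM hdvd]
  exact degree_modByMonic_le_left.trans_lt (hR.trans_le (degree_le_of_natDegree_le hn))

theorem finrank_padeSpace_le {F R : K[X]} (n : ℕ)
    (hmin : ∀ P, IsPadeDenom M L P → F.natDegree ≤ P.natDegree)
    (hR : R.degree < F.degree) (hF : M ∣ F * L - R) :
    finrank K (padeSpace M L n) ≤
      (n - F.natDegree + 1) + (n + F.natDegree - M.natDegree) := by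
  set S := padeSpace M L n
  set c := F.natDegree
  have hFc : F.degree = c := degree_eq_natDegree (ne_zero_of_degree_gt hR)
  have hres : ∀ p, M ∣ p * L - (p * L) %ₘ M := fun p =>
    dvd_sub_comm.mp (dvd_modByMonic_sub _ _)
  let ψ : S →ₗ[K] K[X] := (LinearMap.mulRight K R -
    LinearMap.mulLeft K F ∘ₗ modByMonicHom M ∘ₗ LinearMap.mulRight K L) ∘ₗ S.subtype
  have hψ : ∀ p (hp : p ∈ S), ψ ⟨p, hp⟩ = p * R - F * ((p * L) %ₘ M) := fun _ _ => rfl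
  have hker : (LinearMap.ker ψ).map S.subtype ≤
      (degreeLT K (n - c + 1)).map (LinearMap.mulLeft K F) := by
    rintro _ ⟨⟨p, hpS⟩, hp, rfl⟩
    have hpR : p * R = F * ((p * L) %ₘ M) := by
      rw [← sub_eq_zero, ← hψ p hpS]
      exact hp
    refine mem_map_mulLeft_degreeLT_of_dvd (dvd_of_mul_eq_mul hmin hR hF (hres p) hpR) ?_
    refine (mem_padeSpace.mp hpS).1.trans_lt ?_
    exact_mod_cast (by omega : n < n - c + 1 + c)
  have hrange : LinearMap.range ψ ≤
      (degreeLT K (n + c - M.natDegree)).map (LinearMap.mulLeft K M) := by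
    rintro _ ⟨⟨p, hpS⟩, rfl⟩
    obtain ⟨hpn, hrn⟩ := mem_padeSpace.mp hpS
    have hdvd : M ∣ ψ ⟨p, hpS⟩ := by
      have : ψ ⟨p, hpS⟩ = F * (p * L - (p * L) %ₘ M) - p * (F * L - R) := by
        rw [hψ]
        ring
      rw [this]
      exact dvd_sub ((hres p).mul_left _) (hF.mul_left _)
    have hdeg : (ψ ⟨p, hpS⟩).degree < (n + c : ℕ) := by
      rw [hψ, Nat.cast_add]
      refine (degree_sub_le _ _).trans_lt (max_lt ?_ ?_)
      · exact degree_mul_lt_add WithBot.coe_ne_bot hpn (hR.trans_eq hFc)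
      · rw [add_comm]
        exact degree_mul_lt_add WithBot.coe_ne_bot hFc.le hrn
    refine mem_map_mulLeft_degreeLT_of_dvd hdvd (hdeg.trans_le ?_)
    exact_mod_cast (by omega : n + c ≤ n + c - M.natDegree + M.natDegree)
  calc finrank K S = finrank K (LinearMap.ker ψ) + finrank K (LinearMap.range ψ) := by
        rw [add_comm, ψ.finrank_range_add_finrank_ker]
    _ ≤ (n - c + 1) + (n + c - M.natDegree) := by
        rw [← Submodule.finrank_map_subtype_eq]
        exact add_le_add ((Submodule.finrank_mono hker).trans (finrank_map_degreeLT_le _ _))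
          ((Submodule.finrank_mono hrange).trans (finrank_map_degreeLT_le _ _))

theorem eq_zero_of_forall_isPadeDenom {n k m : ℕ} (hm : m + k = 2 * n) {A : Finset K[X]}
    (hcard : A.card = k + 1) (hdeg : ∀ Q ∈ A, Q.natDegree ≤ n)
    (hind : LinearIndependent K (fun q : A => (q : K[X])))
    (hspan : Ideal.span (A : Set K[X]) = ⊤) (hL : L.degree ≤ m)
    (hA : ∀ Q ∈ A, IsPadeDenom (X ^ (m + 1)) L Q) : L = 0 := by
  obtain ⟨Q₀, hQ₀⟩ : A.Nonempty := card_pos.mp (by omega)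
  obtain ⟨F, ⟨R, hR, hF⟩, hmin⟩ := exists_isPadeDenom_minimal (hA Q₀ hQ₀)
  have hc : F.natDegree ≤ n := (hmin _ (hA Q₀ hQ₀)).trans (hdeg Q₀ hQ₀)
  by_cases hsmall : F.natDegree + n ≤ m + 1
  · have hLM : L.degree < (X ^ (m + 1) : K[X]).degree := by
      rw [degree_X_pow]
      exact hL.trans_lt (by exact_mod_cast m.lt_succ_self)
    refine eq_zero_of_isPadeDenom_of_isUnit hLM ⟨R, hR, hF⟩
      (isUnit_of_forall_dvd_of_span_eq_top hspan fun Q hQ => ?_)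
    obtain ⟨RQ, hRQ, hQL⟩ := hA Q hQ
    refine dvd_of_mul_eq_mul hmin hR hF hQL (mul_eq_mul_of_dvd_sub hR hRQ hF hQL ?_).symm
    rw [degree_X_pow]
    refine (add_le_add degree_le_natDegree degree_le_natDegree).trans ?_
    exact_mod_cast (Nat.add_le_add_left (hdeg Q hQ) _).trans hsmall
  · set S := padeSpace (X ^ (m + 1)) L n
    have hAS : ∀ q : A, (q : K[X]) ∈ S := fun q =>
      (hA q q.2).mem_padeSpace (monic_X_pow _) (hdeg q q.2)
    have hlow := (LinearIndependent.of_comp S.subtype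
      (v := fun q : A => (⟨q, hAS q⟩ : S)) hind).fintype_card_le_finrank
    have hup : finrank K S ≤ (n - F.natDegree + 1) + (n + F.natDegree - (m + 1)) := by
      simpa only [natDegree_X_pow] using finrank_padeSpace_le n hmin hR hF
    rw [Fintype.card_coe, hcard] at hlow
    omega

end Polynomial

theorem span_eq_degreeLE_general (n k : ℕ) (hk : k ≤ n)
    (A : Finset (Polynomial ℝ)) (hcard : A.card = k + 1)
    (hdeg : ∀ Q ∈ A, Q.natDegree ≤ n)
    (hind : LinearIndependent ℝ (fun q : {x // x ∈ A} => (q : Polynomial ℝ)))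
    (hgcd : Ideal.span (A : Set (Polynomial ℝ)) = ⊤) :
    Submodule.span ℝ
        {R : Polynomial ℝ | ∃ Q ∈ A, ∃ j ≤ 2 * n - k - Q.natDegree,
          R = Polynomial.X ^ j * Q} =
      Polynomial.degreeLE ℝ ((2 * n - k : ℕ) : WithBot ℕ) := by
  set m := 2 * n - k
  have hXQ : ∀ Q ∈ A, ∀ j ≤ m - Q.natDegree, (X ^ j * Q).natDegree ≤ m := fun Q hQ j hj =>
    natDegree_mul_le_of_le (natDegree_X_pow_le j) le_rfl |>.trans (by have := hdeg Q hQ; omega)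
  refine le_antisymm (Submodule.span_le.mpr ?_) fun w hw => ?_
  · rintro _ ⟨Q, hQ, j, hj, rfl⟩
    exact mem_degreeLE.mpr (degree_le_of_natDegree_le (hXQ Q hQ j hj))
  by_contra hwS
  obtain ⟨f, hfw, hS⟩ := Submodule.exists_le_ker_of_notMem hwS
  obtain ⟨L, hL, hLf⟩ := exists_coeff_mul_eq f m
  have hA : ∀ Q ∈ A, IsPadeDenom (X ^ (m + 1)) L Q := fun Q hQ =>
    isPadeDenom_of_coeff_eq_zero (hind.ne_zero ⟨Q, hQ⟩) fun t ht htm => by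
      have hj : m - t ≤ m - Q.natDegree := by omega
      have hf0 := hS (Submodule.subset_span ⟨Q, hQ, m - t, hj, rfl⟩)
      rwa [LinearMap.mem_ker, ← hLf _ (hXQ Q hQ _ hj), mul_assoc, coeff_X_pow_mul',
        if_pos (Nat.sub_le m t), Nat.sub_sub_self htm] at hf0
  have hL0 := eq_zero_of_forall_isPadeDenom (by omega) hcard hdeg hind hgcd hL hA
  rw [← hLf w (natDegree_le_iff_degree_le.mpr (mem_degreeLE.mp hw)), hL0, mul_zero,
    coeff_zero] at hfw
  exact hfw rfl

/-- If `𝒜` consists of `k+1` linearly independent polynomials of `ℝ[X]_{≤ n}`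
generating the unit ideal, then the span of the `X^j Q` (`Q ∈ 𝒜`,
`j ≤ 2n - k - deg Q`) is all of `ℝ[X]_{≤ 2n-k}`. -/
theorem span_eq_degreeLE (n k : ℕ) (hn : 1 ≤ n) (hk : k ≤ n)
    (A : Finset (Polynomial ℝ)) (hcard : A.card = k + 1)
    (hdeg : ∀ Q ∈ A, Q.natDegree ≤ n)
    (hind : LinearIndependent ℝ (fun q : {x // x ∈ A} => (q : Polynomial ℝ)))
    (hgcd : Ideal.span (A : Set (Polynomial ℝ)) = ⊤) :
    Submodule.span ℝ
        {R : Polynomial ℝ | ∃ Q ∈ A, ∃ j ≤ 2 * n - k - Q.natDegree,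
          R = Polynomial.X ^ j * Q} =
      Polynomial.degreeLE ℝ ((2 * n - k : ℕ) : WithBot ℕ) :=
  span_eq_degreeLE_general n k hk A hcard hdeg hind hgcd
end
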